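/- For every discrete memoryless channel (X, Y, W) with finite input alphabet X and finite output alphabet Y, the symmetric capacity I⁰(W) is achievable: for every ε > 0 and all sufficiently large block lengths n, there exist a positive integer M, an encoder e : {1,…,M} → Xⁿ and a decoder d : Yⁿ → {1,…,M} such that (1/n)·log₂ M ≥ I⁰(W) − ε and the average error probability (1/M)·Σ_{m=1}^{M} Wⁿ(d(Yⁿ) ≠ m | Xⁿ = e(m)) is at most ε, where Wⁿ denotes the n-fold memoryless extension of W. -/

import Mathlib

/-!
Random coding with a threshold decoder. Draw the `M` codewords independently from the uniform
product distribution and decode `y` to a message whose codeword `x` satisfies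
`Wⁿ(y|x) > γ Qⁿ(y)`, where `Qⁿ` is the output distribution. The sent message is missed only if its
own codeword fails this test, and a wrong codeword, being independent of `y`, passes it with
probability at most `1/γ`; so some codebook has average error at most
`P(Wⁿ(Y|X) ≤ γ Qⁿ(Y)) + M/γ`. The information density `log₂ (Wⁿ(y|x) / Qⁿ(y))` of `n` uses is a
sum of `n` i.i.d. terms with mean `I⁰(W)`, so for `γ = 2^{n(I⁰-δ)}` Chebyshev's inequality bounds
the first term by `Var/(nδ²)`, while `M ≈ 2^{n(I⁰-2δ)}` makes the second at most `2^{1-nδ}`.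
-/

open Finset

section PiWeight

variable {ι Z : Type*} [Fintype ι]

def piWeight (w : Z → ℝ) (g : ι → Z) : ℝ := ∏ i, w (g i)

theorem piWeight_nonneg {w : Z → ℝ} (hw : ∀ z, 0 ≤ w z) (g : ι → Z) : 0 ≤ piWeight w g :=
  prod_nonneg fun i _ => hw (g i)

variable [DecidableEq ι] [Fintype Z]

theorem sum_piWeight_mul_prod (w : Z → ℝ) (h : ι → Z → ℝ) :
    ∑ g : ι → Z, piWeight w g * ∏ i, h i (g i) = ∏ i, ∑ z, w z * h i z := by
  simp only [piWeight, ← prod_mul_distrib]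
  exact (Fintype.prod_sum fun i z => w z * h i z).symm

theorem sum_piWeight {w : Z → ℝ} (hw : ∑ z, w z = 1) : ∑ g : ι → Z, piWeight w g = 1 := by
  simpa [hw] using sum_piWeight_mul_prod (ι := ι) w fun _ _ => 1

theorem sum_piWeight_mul_apply {w : Z → ℝ} (hw : ∑ z, w z = 1) (i : ι) (F : Z → ℝ) :
    ∑ g : ι → Z, piWeight w g * F (g i) = ∑ z, w z * F z := by
  have key := sum_piWeight_mul_prod w fun k z => if k = i then F z else 1
  rw [Fintype.prod_eq_single i fun k hk => by simp [hk, hw]] at key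
  simpa [Fintype.prod_ite_eq'] using key

theorem sum_piWeight_mul_apply_mul_apply {w : Z → ℝ} (hw : ∑ z, w z = 1) {i j : ι} (hij : i ≠ j)
    (F G : Z → ℝ) :
    ∑ g : ι → Z, piWeight w g * (F (g i) * G (g j)) = (∑ z, w z * F z) * ∑ z, w z * G z := by
  have key := sum_piWeight_mul_prod w fun k z => if k = i then F z else if k = j then G z else 1
  rw [Fintype.prod_eq_mul i j hij fun k hk => by simp [hk, hw]] at key
  convert key using 3 with g
  · rw [Fintype.prod_eq_mul i j hij fun k hk => by simp [hk]]
    simp [hij.symm]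
  all_goals simp [hij.symm]

theorem sum_piWeight_mul_sum_sub_sq {w : Z → ℝ} (hw : ∑ z, w z = 1) (f : Z → ℝ) {μ : ℝ}
    (hμ : ∑ z, w z * f z = μ) :
    ∑ g : ι → Z, piWeight w g * (∑ i, f (g i) - Fintype.card ι * μ) ^ 2 =
      Fintype.card ι * ∑ z, w z * (f z - μ) ^ 2 := by
  have hcentered : ∑ z, w z * (f z - μ) = 0 := by
    simp [mul_sub, sum_sub_distrib, hμ, ← sum_mul, hw]
  have hsum (g : ι → Z) : ∑ i, f (g i) - Fintype.card ι * μ = ∑ i, (f (g i) - μ) := by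
    simp [sum_sub_distrib]
  calc ∑ g : ι → Z, piWeight w g * (∑ i, f (g i) - Fintype.card ι * μ) ^ 2
      = ∑ i, ∑ j, ∑ g : ι → Z, piWeight w g * ((f (g i) - μ) * (f (g j) - μ)) := by
        simp_rw [hsum, sq, sum_mul_sum, mul_sum]
        rw [sum_comm]
        exact sum_congr rfl fun i _ => sum_comm
    _ = ∑ i : ι, ∑ j : ι, (if i = j then ∑ z, w z * (f z - μ) ^ 2 else 0) := by
        refine sum_congr rfl fun i _ => sum_congr rfl fun j _ => ?_
        split_ifs with hij
        · subst hij
          rw [← sum_piWeight_mul_apply hw i fun z => (f z - μ) ^ 2]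
          simp only [sq]
        · rw [sum_piWeight_mul_apply_mul_apply hw hij (fun z => f z - μ) (fun z => f z - μ),
            hcentered, zero_mul]
    _ = Fintype.card ι * ∑ z, w z * (f z - μ) ^ 2 := by simp

end PiWeight

theorem exists_le_of_sum_mul_le {α : Type*} [Fintype α] {ω f : α → ℝ} (hω : ∀ a, 0 ≤ ω a)
    (hω1 : ∑ a, ω a = 1) {b : ℝ} (h : ∑ a, ω a * f a ≤ b) : ∃ a, f a ≤ b := by
  by_contra! hf
  obtain ⟨a, -, ha⟩ := exists_lt_of_sum_lt (s := univ) (f := fun _ => (0 : ℝ)) (g := ω)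
    (by simp [hω1])
  have : ∑ a, ω a * b < ∑ a, ω a * f a :=
    sum_lt_sum (fun a _ => mul_le_mul_of_nonneg_left (hf a).le (hω a))
      ⟨a, mem_univ a, mul_lt_mul_of_pos_left (hf a) ha⟩
  rw [← sum_mul, hω1, one_mul] at this
  linarith

theorem sum_filter_le_sub_le_sum_mul_sq_div_sq {α : Type*} (s : Finset α) {P : α → ℝ}
    (hP : ∀ a ∈ s, 0 ≤ P a) (S : α → ℝ) (μ : ℝ) {t : ℝ} (ht : 0 < t) :
    ∑ a ∈ s with S a ≤ μ - t, P a ≤ (∑ a ∈ s, P a * (S a - μ) ^ 2) / t ^ 2 := by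
  rw [sum_div]
  calc ∑ a ∈ s with S a ≤ μ - t, P a
      ≤ ∑ a ∈ s with S a ≤ μ - t, P a * (S a - μ) ^ 2 / t ^ 2 := by
        refine sum_le_sum fun a ha => ?_
        obtain ⟨has, hSa⟩ := mem_filter.1 ha
        have : 1 ≤ (S a - μ) ^ 2 / t ^ 2 := by
          rw [one_le_div (by positivity)]
          nlinarith
        simpa [mul_div_assoc] using mul_le_mul_of_nonneg_left this (hP a has)
    _ ≤ ∑ a ∈ s, P a * (S a - μ) ^ 2 / t ^ 2 :=
        sum_le_sum_of_subset_of_nonneg (filter_subset _ s) fun a ha _ =>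
          div_nonneg (mul_nonneg (hP a ha) (sq_nonneg _)) (sq_nonneg _)

theorem sum_pi_sum_pi_eq_sum_pi_prod {ι X Y : Type*} [Fintype ι] [DecidableEq ι] [Fintype X]
    [Fintype Y] (F : (ι → X × Y) → ℝ) :
    ∑ x : ι → X, ∑ y : ι → Y, F (fun i => (x i, y i)) = ∑ g : ι → X × Y, F g := by
  rw [← Fintype.sum_prod_type']
  exact Fintype.sum_equiv (Equiv.arrowProdEquivProdArrow ι (fun _ => X) (fun _ => Y)).symm _ _
    fun _ => rfl

section Channel

variable {X Y : Type*} [Fintype X] [Fintype Y]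

def outputDist (π : X → ℝ) (W : X → Y → ℝ) (y : Y) : ℝ := ∑ x, π x * W x y

-- May take the junk value `logb 2 0 = 0` where `π x * W x y = 0`; it is only ever weighted by
-- `π x * W x y`.
noncomputable def infoDensity (π : X → ℝ) (W : X → Y → ℝ) (x : X) (y : Y) : ℝ :=
  Real.logb 2 (W x y / outputDist π W y)

noncomputable def mutualInfo (π : X → ℝ) (W : X → Y → ℝ) : ℝ :=
  ∑ x, ∑ y, π x * W x y * infoDensity π W x y

noncomputable def infoVariance (π : X → ℝ) (W : X → Y → ℝ) : ℝ :=
  ∑ x, ∑ y, π x * W x y * (infoDensity π W x y - mutualInfo π W) ^ 2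

noncomputable def averageError (W : X → Y → ℝ) {M : ℕ} (e : Fin M → X) (d : Y → Fin M) : ℝ :=
  1 / M * ∑ m, ∑ y with d y ≠ m, W (e m) y

end Channel

section RandomCoding

variable {A B : Type*} [Fintype A] {V : A → B → ℝ} {p : A → ℝ} {γ : ℝ} {M : ℕ}

noncomputable def thresholdDecoder (V : A → B → ℝ) (p : A → ℝ) (γ : ℝ) (m₀ : Fin M)
    (c : Fin M → A) (b : B) : Fin M :=
  if h : ∃ m, γ * outputDist p V b < V (c m) b then h.choose else m₀

theorem thresholdDecoder_ne {m₀ : Fin M} {c : Fin M → A} {b : B} {m : Fin M}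
    (h : thresholdDecoder V p γ m₀ c b ≠ m) :
    V (c m) b ≤ γ * outputDist p V b ∨ ∃ m' ≠ m, γ * outputDist p V b < V (c m') b := by
  by_contra! H
  have hex : ∃ m', γ * outputDist p V b < V (c m') b := ⟨m, H.1⟩
  rw [thresholdDecoder, dif_pos hex] at h
  exact (H.2 _ h).not_gt hex.choose_spec

variable [Fintype B]

noncomputable def thresholdFailureProb (V : A → B → ℝ) (p : A → ℝ) (γ : ℝ) : ℝ :=
  ∑ a, p a * ∑ b with V a b ≤ γ * outputDist p V b, V a b

theorem sum_thresholdDecoder_ne_le (hV : ∀ a b, 0 ≤ V a b) (m₀ : Fin M) (c : Fin M → A)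
    (m : Fin M) :
    ∑ b with thresholdDecoder V p γ m₀ c b ≠ m, V (c m) b ≤
      ∑ b with V (c m) b ≤ γ * outputDist p V b, V (c m) b +
        ∑ m' ∈ univ.erase m, ∑ b with γ * outputDist p V b < V (c m') b, V (c m) b := by
  simp only [sum_filter]
  rw [sum_comm, ← sum_add_distrib]
  refine sum_le_sum fun b _ => ?_
  have hrest :
      0 ≤ ∑ m' ∈ univ.erase m, if γ * outputDist p V b < V (c m') b then V (c m) b else 0 :=
    sum_nonneg fun _ _ => by split_ifs <;> simp [hV]
  split_ifs with hne hfail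
  · linarith
  · obtain ⟨m', hm', hpass⟩ := (thresholdDecoder_ne hne).resolve_left hfail
    have := single_le_sum (fun m'' _ => by split_ifs <;> simp [hV])
      (mem_erase.2 ⟨hm', mem_univ m'⟩)
      (f := fun m' => if γ * outputDist p V b < V (c m') b then V (c m) b else 0)
    simp only [if_pos hpass] at this
    linarith
  · linarith [hV (c m) b]
  · simpa using hrest

theorem sum_piWeight_mul_sum_lt_le_one_div (hV0 : ∀ a b, 0 ≤ V a b) (hV1 : ∀ a, ∑ b, V a b = 1)
    (hp0 : ∀ a, 0 ≤ p a) (hp1 : ∑ a, p a = 1) (hγ : 0 < γ) {m m' : Fin M} (hm : m ≠ m') :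
    ∑ c : Fin M → A, piWeight p c * ∑ b with γ * outputDist p V b < V (c m') b, V (c m) b ≤
      1 / γ := by
  calc ∑ c : Fin M → A, piWeight p c * ∑ b with γ * outputDist p V b < V (c m') b, V (c m) b
      = ∑ b : B, ∑ c : Fin M → A, piWeight p c *
          (V (c m) b * if γ * outputDist p V b < V (c m') b then (1 : ℝ) else 0) := by
        simp only [sum_filter, mul_ite, mul_one, mul_zero, mul_sum]
        rw [sum_comm]
    _ = ∑ b, outputDist p V b * ∑ a with γ * outputDist p V b < V a b, p a := by
        refine sum_congr rfl fun b _ => ?_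
        rw [sum_piWeight_mul_apply_mul_apply hp1 hm (fun a => V a b)
          (fun a => if γ * outputDist p V b < V a b then 1 else 0)]
        simp only [mul_ite, mul_one, mul_zero, ← sum_filter]
        rfl
    _ ≤ ∑ b, ∑ a, p a * V a b / γ := by
        refine sum_le_sum fun b _ => ?_
        rw [mul_sum]
        calc ∑ a with γ * outputDist p V b < V a b, outputDist p V b * p a
            ≤ ∑ a with γ * outputDist p V b < V a b, p a * V a b / γ := by
              refine sum_le_sum fun a ha => ?_
              rw [le_div_iff₀ hγ]
              nlinarith [(mem_filter.1 ha).2, hp0 a]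
          _ ≤ ∑ a, p a * V a b / γ :=
              sum_le_sum_of_subset_of_nonneg (filter_subset _ _) fun a _ _ =>
                div_nonneg (mul_nonneg (hp0 a) (hV0 a b)) hγ.le
    _ = 1 / γ := by
        rw [sum_comm]
        simp_rw [← sum_div, ← mul_sum, hV1, mul_one, hp1]

theorem sum_piWeight_mul_sum_thresholdDecoder_ne_le (hV0 : ∀ a b, 0 ≤ V a b)
    (hV1 : ∀ a, ∑ b, V a b = 1) (hp0 : ∀ a, 0 ≤ p a) (hp1 : ∑ a, p a = 1) (hγ : 0 < γ)
    (m₀ m : Fin M) :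
    ∑ c : Fin M → A, piWeight p c * ∑ b with thresholdDecoder V p γ m₀ c b ≠ m, V (c m) b ≤
      thresholdFailureProb V p γ + M / γ :=
  calc ∑ c : Fin M → A, piWeight p c * ∑ b with thresholdDecoder V p γ m₀ c b ≠ m, V (c m) b
      ≤ ∑ c : Fin M → A, piWeight p c * (∑ b with V (c m) b ≤ γ * outputDist p V b, V (c m) b +
          ∑ m' ∈ univ.erase m, ∑ b with γ * outputDist p V b < V (c m') b, V (c m) b) := by
        gcongr with c
        · exact piWeight_nonneg hp0 c
        · exact sum_thresholdDecoder_ne_le hV0 m₀ c m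
    _ = ∑ c : Fin M → A, piWeight p c * ∑ b with V (c m) b ≤ γ * outputDist p V b, V (c m) b +
          ∑ m' ∈ univ.erase m, ∑ c : Fin M → A,
            piWeight p c * ∑ b with γ * outputDist p V b < V (c m') b, V (c m) b := by
        simp only [mul_add, sum_add_distrib, mul_sum (univ.erase m)]
        rw [sum_comm]
    _ ≤ thresholdFailureProb V p γ + ∑ m' ∈ univ.erase m, 1 / γ := by
        refine add_le_add (sum_piWeight_mul_apply hp1 m fun a =>
          ∑ b with V a b ≤ γ * outputDist p V b, V a b).le (sum_le_sum fun m' hm' => ?_)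
        exact sum_piWeight_mul_sum_lt_le_one_div hV0 hV1 hp0 hp1 hγ (ne_of_mem_erase hm').symm
    _ ≤ thresholdFailureProb V p γ + M / γ := by
        gcongr
        calc ∑ m' ∈ univ.erase m, 1 / γ ≤ ∑ m' : Fin M, 1 / γ :=
              sum_le_sum_of_subset_of_nonneg (erase_subset _ _) fun _ _ _ => by positivity
          _ = M / γ := by simp [div_eq_mul_inv]

theorem exists_averageError_le (hV0 : ∀ a b, 0 ≤ V a b) (hV1 : ∀ a, ∑ b, V a b = 1)
    (hp0 : ∀ a, 0 ≤ p a) (hp1 : ∑ a, p a = 1) (hM : 0 < M) (hγ : 0 < γ) :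
    ∃ (e : Fin M → A) (d : B → Fin M), averageError V e d ≤
      thresholdFailureProb V p γ + M / γ := by
  set D := thresholdDecoder V p γ ⟨0, hM⟩
  have hmean : ∑ c : Fin M → A, piWeight p c * ∑ m, ∑ b with D c b ≠ m, V (c m) b ≤
      M * (thresholdFailureProb V p γ + M / γ) := by
    simp_rw [mul_sum (univ : Finset (Fin M))]
    rw [sum_comm]
    refine (sum_le_sum fun m _ =>
      sum_piWeight_mul_sum_thresholdDecoder_ne_le hV0 hV1 hp0 hp1 hγ ⟨0, hM⟩ m).trans_eq ?_
    simp [mul_add]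
  obtain ⟨c, hc⟩ := exists_le_of_sum_mul_le (piWeight_nonneg hp0) (sum_piWeight hp1) hmean
  refine ⟨c, D c, ?_⟩
  calc averageError V c (D c)
      ≤ 1 / M * (M * (thresholdFailureProb V p γ + M / γ)) := by
        unfold averageError; gcongr
    _ = thresholdFailureProb V p γ + M / γ := by field_simp

end RandomCoding

section Memoryless

variable {ι X Y : Type*} [Fintype ι] {π : X → ℝ} {W : X → Y → ℝ}

def piChannel (W : X → Y → ℝ) (x : ι → X) (y : ι → Y) : ℝ := ∏ i, W (x i) (y i)

theorem piChannel_nonneg (hW0 : ∀ x y, 0 ≤ W x y) (x : ι → X) (y : ι → Y) :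
    0 ≤ piChannel W x y :=
  prod_nonneg fun i _ => hW0 (x i) (y i)

theorem piWeight_mul_piChannel (x : ι → X) (y : ι → Y) :
    piWeight π x * piChannel W x y =
      piWeight (fun z : X × Y => π z.1 * W z.1 z.2) (fun i => (x i, y i)) :=
  prod_mul_distrib.symm

theorem sum_piChannel [DecidableEq ι] [Fintype Y] (hW1 : ∀ x, ∑ y, W x y = 1) (x : ι → X) :
    ∑ y, piChannel W x y = 1 := by
  simp only [piChannel, ← Fintype.prod_sum, hW1, prod_const_one]

variable [Fintype X]

theorem sum_infoDensity_le_of_piChannel_le (hπ0 : ∀ x, 0 ≤ π x) (hW0 : ∀ x y, 0 ≤ W x y)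
    {x : ι → X} {y : ι → Y} {r : ℝ} (hpos : 0 < piWeight π x * piChannel W x y)
    (h : piChannel W x y ≤ 2 ^ r * ∏ i, outputDist π W (y i)) :
    ∑ i, infoDensity π W (x i) (y i) ≤ r := by
  have hjoint (i : ι) : 0 < π (x i) * W (x i) (y i) := by
    refine (mul_nonneg (hπ0 _) (hW0 _ _)).lt_of_ne fun h0 => hpos.ne' ?_
    rw [piWeight_mul_piChannel]
    exact prod_eq_zero (mem_univ i) h0.symm
  have hW (i : ι) : 0 < W (x i) (y i) := pos_of_mul_pos_right (hjoint i) (hπ0 _)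
  have hQ (i : ι) : 0 < outputDist π W (y i) :=
    (hjoint i).trans_le <| single_le_sum (fun x' _ => mul_nonneg (hπ0 x') (hW0 x' (y i)))
      (mem_univ (x i))
  have hratio : ∏ i, W (x i) (y i) / outputDist π W (y i) ≤ 2 ^ r := by
    rw [prod_div_distrib, div_le_iff₀ (prod_pos fun i _ => hQ i)]
    exact h
  rwa [← Real.logb_le_iff_le_rpow one_lt_two (prod_pos fun i _ => div_pos (hW i) (hQ i)),
    Real.logb_prod _ _ fun i _ => (div_pos (hW i) (hQ i)).ne'] at hratio

variable [DecidableEq ι]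

theorem outputDist_piWeight_piChannel (y : ι → Y) :
    outputDist (piWeight π) (piChannel W) y = ∏ i, outputDist π W (y i) := by
  simp only [outputDist, piWeight, piChannel, ← prod_mul_distrib]
  exact (Fintype.prod_sum fun i x => π x * W x (y i)).symm

variable [Fintype Y]

theorem thresholdFailureProb_piChannel_le_sum_filter (hπ0 : ∀ x, 0 ≤ π x)
    (hW0 : ∀ x y, 0 ≤ W x y) (r : ℝ) :
    thresholdFailureProb (piChannel (ι := ι) W) (piWeight π) (2 ^ r) ≤
      ∑ g : ι → X × Y with ∑ i, infoDensity π W (g i).1 (g i).2 ≤ r,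
        piWeight (fun z : X × Y => π z.1 * W z.1 z.2) g := by
  have hJ0 (z : X × Y) : 0 ≤ π z.1 * W z.1 z.2 := mul_nonneg (hπ0 _) (hW0 _ _)
  rw [sum_filter, ← sum_pi_sum_pi_eq_sum_pi_prod]
  refine sum_le_sum fun x _ => ?_
  rw [mul_sum, sum_filter]
  refine sum_le_sum fun y _ => ?_
  rw [piWeight_mul_piChannel]
  split_ifs with hfail hdensity
  · exact le_rfl
  · refine (piWeight_nonneg hJ0 _).eq_or_lt.elim ge_of_eq fun hpos => absurd ?_ hdensity
    rw [outputDist_piWeight_piChannel] at hfail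
    rw [← piWeight_mul_piChannel] at hpos
    exact sum_infoDensity_le_of_piChannel_le hπ0 hW0 hpos hfail
  · exact piWeight_nonneg hJ0 _
  · exact le_rfl

theorem thresholdFailureProb_piChannel_le [Nonempty ι] (hπ0 : ∀ x, 0 ≤ π x)
    (hπ1 : ∑ x, π x = 1) (hW0 : ∀ x y, 0 ≤ W x y) (hW1 : ∀ x, ∑ y, W x y = 1) {δ : ℝ}
    (hδ : 0 < δ) :
    thresholdFailureProb (piChannel (ι := ι) W) (piWeight π)
        (2 ^ (Fintype.card ι * (mutualInfo π W - δ))) ≤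
      infoVariance π W / (Fintype.card ι * δ ^ 2) := by
  set n : ℝ := (Fintype.card ι : ℝ)
  set J : X × Y → ℝ := fun z => π z.1 * W z.1 z.2
  have hJ1 : ∑ z, J z = 1 := by simp [J, Fintype.sum_prod_type, ← mul_sum, hW1, hπ1]
  have hJI : ∑ z, J z * infoDensity π W z.1 z.2 = mutualInfo π W := Fintype.sum_prod_type _
  have hn : 0 < n := Nat.cast_pos.2 Fintype.card_pos
  calc thresholdFailureProb (piChannel W) (piWeight π) (2 ^ (n * (mutualInfo π W - δ)))
      ≤ ∑ g : ι → X × Y with ∑ i, infoDensity π W (g i).1 (g i).2 ≤ n * mutualInfo π W - n * δ,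
          piWeight J g := by
        rw [← mul_sub]
        exact thresholdFailureProb_piChannel_le_sum_filter hπ0 hW0 _
    _ ≤ (∑ g : ι → X × Y, piWeight J g *
          (∑ i, infoDensity π W (g i).1 (g i).2 - n * mutualInfo π W) ^ 2) / (n * δ) ^ 2 :=
        sum_filter_le_sub_le_sum_mul_sq_div_sq univ
          (fun g _ => piWeight_nonneg (fun z => mul_nonneg (hπ0 _) (hW0 _ _)) g) _ _
          (by positivity)
    _ = n * infoVariance π W / (n * δ) ^ 2 := by
        rw [sum_piWeight_mul_sum_sub_sq hJ1 _ hJI, infoVariance, Fintype.sum_prod_type]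
    _ = infoVariance π W / (n * δ ^ 2) := by
        field_simp

theorem exists_piChannel_averageError_le [Nonempty ι] (hπ0 : ∀ x, 0 ≤ π x)
    (hπ1 : ∑ x, π x = 1) (hW0 : ∀ x y, 0 ≤ W x y) (hW1 : ∀ x, ∑ y, W x y = 1) {M : ℕ}
    (hM : 0 < M) {δ : ℝ} (hδ : 0 < δ) :
    ∃ (e : Fin M → ι → X) (d : (ι → Y) → Fin M), averageError (piChannel W) e d ≤
      infoVariance π W / (Fintype.card ι * δ ^ 2) +
        M / 2 ^ (Fintype.card ι * (mutualInfo π W - δ)) := by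
  obtain ⟨e, d, h⟩ := exists_averageError_le (piChannel_nonneg hW0)
    (sum_piChannel (ι := ι) hW1) (piWeight_nonneg hπ0) (sum_piWeight hπ1) hM
    (by positivity : (0 : ℝ) < 2 ^ (Fintype.card ι * (mutualInfo π W - δ)))
  exact ⟨e, d,
    h.trans (add_le_add_left (thresholdFailureProb_piChannel_le hπ0 hπ1 hW0 hW1 hδ) _)⟩

end Memoryless

open Filter Topology in
theorem tendsto_div_natCast_add_two_div_rpow_pow (c : ℝ) {δ : ℝ} (hδ : 0 < δ) :
    Tendsto (fun n : ℕ => c / n + 2 / (2 ^ δ) ^ n) atTop (𝓝 0) := by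
  simpa using (tendsto_const_div_atTop_nhds_zero_nat c).add
    ((tendsto_pow_atTop_atTop_of_one_lt (Real.one_lt_rpow one_lt_two hδ)).const_div_atTop 2)

theorem exists_nat_le_logb_and_div_rpow_le {n : ℕ} (hn : 0 < n) {r : ℝ} (hr : 0 ≤ r) (δ : ℝ) :
    ∃ M : ℕ, 0 < M ∧ r ≤ 1 / n * Real.logb 2 M ∧
      M / 2 ^ (n * (r + δ)) ≤ 2 / ((2 : ℝ) ^ δ) ^ n := by
  set t : ℝ := 2 ^ (n * r) with ht_def
  have ht : 1 ≤ t := Real.one_le_rpow one_le_two (by positivity)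
  refine ⟨⌈t⌉₊, Nat.ceil_pos.2 (by linarith), ?_, ?_⟩
  · have hn' : (0 : ℝ) < n := Nat.cast_pos.2 hn
    calc r = 1 / n * Real.logb 2 t := by
          rw [ht_def, Real.logb_rpow two_pos (by norm_num)]; field_simp
      _ ≤ 1 / n * Real.logb 2 ⌈t⌉₊ := by
          gcongr
          · norm_num
          · exact Nat.le_ceil t
  · calc (⌈t⌉₊ : ℝ) / 2 ^ (n * (r + δ)) ≤ 2 * t / 2 ^ (n * (r + δ)) := by
          gcongr
          exact (Nat.ceil_lt_two_mul (by linarith)).le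
      _ = 2 / ((2 : ℝ) ^ δ) ^ n := by
          rw [ht_def, ← Real.rpow_natCast, ← Real.rpow_mul zero_le_two, mul_add,
            Real.rpow_add two_pos]
          field_simp

theorem symmetric_capacity_achievable
    {X Y : Type} [Fintype X] [Fintype Y] [Nonempty X]
    (W : X → Y → ℝ)
    (hW0 : ∀ x y, 0 ≤ W x y) (hW1 : ∀ x, ∑ y, W x y = 1)
    (I0 : ℝ)
    (hI0 : I0 = ∑ x, ∑ y, (1 / (Fintype.card X : ℝ)) * W x y *
      Real.logb 2 (W x y / ((1 / (Fintype.card X : ℝ)) * ∑ x' : X, W x' y)))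
    (ε : ℝ) (hε : 0 < ε) :
    ∃ n₀ : ℕ, ∀ n : ℕ, n₀ ≤ n →
      ∃ M : ℕ, 0 < M ∧
        ∃ (e : Fin M → (Fin n → X)) (d : (Fin n → Y) → Fin M),
          (1 / (n : ℝ)) * Real.logb 2 (M : ℝ) ≥ I0 - ε ∧
          (1 / (M : ℝ)) * ∑ m : Fin M,
              ∑ y ∈ Finset.univ.filter (fun y : Fin n → Y => d y ≠ m),
                ∏ i, W (e m i) (y i) ≤ ε := by
  set π : X → ℝ := fun _ => 1 / Fintype.card X
  have hπ0 (x : X) : 0 ≤ π x := one_div_nonneg.2 (Nat.cast_nonneg _)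
  have hπ1 : ∑ x, π x = 1 := by simp [π]
  have hI : mutualInfo π W = I0 := by simp [hI0, mutualInfo, infoDensity, outputDist, π, mul_sum]
  rcases le_or_gt I0 ε with hIε | hIε
  · refine ⟨0, fun n _ => ⟨1, one_pos, fun _ _ => Classical.arbitrary X, fun _ => 0, ?_, ?_⟩⟩
    · simpa using hIε
    · simp [Fin.eq_zero, hε.le]
  set δ := ε / 4 with hδ
  have hδ0 : 0 < δ := by positivity
  obtain ⟨n₀, hn₀⟩ := Filter.eventually_atTop.1 <|
    (tendsto_div_natCast_add_two_div_rpow_pow (infoVariance π W / δ ^ 2) hδ0).eventually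
      (ge_mem_nhds hε)
  refine ⟨n₀ + 1, fun n hn => ?_⟩
  have : Nonempty (Fin n) := ⟨⟨0, by omega⟩⟩
  obtain ⟨M, hM, hrate, hMδ⟩ :=
    exists_nat_le_logb_and_div_rpow_le (by omega : 0 < n) (r := I0 - 2 * δ) (by linarith) δ
  obtain ⟨e, d, herr⟩ := exists_piChannel_averageError_le (ι := Fin n) hπ0 hπ1 hW0 hW1 hM hδ0
  refine ⟨M, hM, e, d, by linarith, herr.trans ?_⟩
  rw [Fintype.card_fin, hI, div_mul_eq_div_div_swap]
  rw [show I0 - 2 * δ + δ = I0 - δ by ring] at hMδ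
  linarith [hn₀ n (by omega)]
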